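/- Let M > 0, a ∈ ℝ, p = r - i·a·x, Δ_r = r² - 2Mr + a², Σ = r² + a²x², and define the pairing ⟨f,g⟩ = (Δ_r/Σ)·(∂_r f)(∂_r g) + ((1-x²)/Σ)·(∂_x f)(∂_x g). Define the complex function 𝓘 = -M^{1/3}/p (with M^{1/3} the real cube root). Then the curvature invariant 𝕄 := -𝓘^{-4}·⟨𝓘,𝓘⟩ + 𝓘 + conj(𝓘) is constant: 𝕄 = -M^{-2/3} at every point (r,x) where p ≠ 0, Σ ≠ 0. -/

import Mathlib

open Complex

/-- The `(r,x)`-block gradient pairing of the inverse Kerr metric. -/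
noncomputable def kerrPairing (a M : ℝ) (f g : ℝ → ℝ → ℂ) (r x : ℝ) : ℂ :=
  (((r ^ 2 - 2 * M * r + a ^ 2) / (r ^ 2 + a ^ 2 * x ^ 2) : ℝ) : ℂ) *
      deriv (fun s => f s x) r * deriv (fun s => g s x) r
  + (((1 - x ^ 2) / (r ^ 2 + a ^ 2 * x ^ 2) : ℝ) : ℂ) *
      deriv (fun s => f r s) x * deriv (fun s => g r s) x

/-!
With `c = M^{1/3}` and `p = r - iax`, the function `𝓘 = -c/p` has `∂_r 𝓘 = c/p²` and
`∂_x 𝓘 = -iac/p²`, so `⟨𝓘,𝓘⟩ = (c²/p⁴)(Δ_r - a²(1-x²))/Σ = (c²/p⁴)(Σ - 2Mr)/Σ` and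
`-𝓘⁻⁴⟨𝓘,𝓘⟩ = -c⁻² + 2cr/Σ` because `M = c³`. Since `p p̄ = Σ` and `p + p̄ = 2r`,
the real part `𝓘 + 𝓘̄ = -2cr/Σ` cancels the second term.
-/

theorem HasDerivAt.neg_const_div {z : ℝ → ℂ} {z' : ℂ} {t : ℝ} (c : ℂ)
    (hz : HasDerivAt z z' t) (h0 : z t ≠ 0) :
    HasDerivAt (fun s => -c / z s) (c * z' / z t ^ 2) t :=
  ((hasDerivAt_const t (-c)).fun_div hz h0).congr_deriv (by ring)

section

variable (a c r x : ℝ)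

theorem hasDerivAt_ofReal_sub_I_mul_left :
    HasDerivAt (fun s : ℝ => (s : ℂ) - I * a * x) 1 r :=
  (ofRealCLM.hasDerivAt (x := r)).sub_const _

theorem hasDerivAt_ofReal_sub_I_mul_right :
    HasDerivAt (fun s : ℝ => (r : ℂ) - I * a * s) (-(I * a)) x := by
  simpa using ((ofRealCLM.hasDerivAt (x := x)).const_mul (I * (a : ℂ))).const_sub (r : ℂ)

theorem kerrPairing_neg_div_self (M : ℝ) (hp : (r : ℂ) - I * a * x ≠ 0) :
    kerrPairing a M (fun r x => -(c : ℂ) / ((r : ℂ) - I * a * x))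
        (fun r x => -(c : ℂ) / ((r : ℂ) - I * a * x)) r x
      = c ^ 2 / ((r : ℂ) - I * a * x) ^ 4 *
          ((r ^ 2 - 2 * M * r + a ^ 2 * x ^ 2) / (r ^ 2 + a ^ 2 * x ^ 2)) := by
  rw [kerrPairing, ((hasDerivAt_ofReal_sub_I_mul_left a r x).neg_const_div c hp).deriv,
    ((hasDerivAt_ofReal_sub_I_mul_right a r x).neg_const_div c hp).deriv]
  push_cast
  generalize (r : ℂ) - I * a * x = p
  linear_combination ((1 - x ^ 2) / (r ^ 2 + a ^ 2 * x ^ 2) * c ^ 2 * a ^ 2 / p ^ 4) * I_sq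

theorem kerrInvariant_eq_neg_inv_sq (M : ℝ) (hc : c ≠ 0) (hM : c ^ 3 = M)
    (hp : (r : ℂ) - I * a * x ≠ 0) :
    -((-(c : ℂ) / ((r : ℂ) - I * a * x)) ^ 4)⁻¹ * (c ^ 2 / ((r : ℂ) - I * a * x) ^ 4 *
          ((r ^ 2 - 2 * M * r + a ^ 2 * x ^ 2) / (r ^ 2 + a ^ 2 * x ^ 2)))
      + -(c : ℂ) / ((r : ℂ) - I * a * x) + starRingEnd ℂ (-(c : ℂ) / ((r : ℂ) - I * a * x))
      = -(c ^ 2 : ℂ)⁻¹ := by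
  have hconj : starRingEnd ℂ (-(c : ℂ) / ((r : ℂ) - I * a * x)) = -c / (r + I * a * x) := by
    simp
  have hq : (r : ℂ) + I * a * x ≠ 0 := by
    simpa using (map_ne_zero (starRingEnd ℂ)).2 hp
  have hsig : (r ^ 2 + a ^ 2 * x ^ 2 : ℂ) = (r - I * a * x) * (r + I * a * x) := by
    linear_combination (a : ℂ) ^ 2 * x ^ 2 * I_sq
  have hnum : (r ^ 2 - 2 * M * r + a ^ 2 * x ^ 2 : ℂ)
      = (r - I * a * x) * (r + I * a * x) - M * ((r - I * a * x) + (r + I * a * x)) := by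
    linear_combination (a : ℂ) ^ 2 * x ^ 2 * I_sq
  have hc' : (c : ℂ) ≠ 0 := ofReal_ne_zero.2 hc
  have hM' : (M : ℂ) = c ^ 3 := by exact_mod_cast hM.symm
  rw [hconj, hnum, hsig, hM']
  generalize (r : ℂ) - I * a * x = p at hp ⊢
  generalize (r : ℂ) + I * a * x = q at hq ⊢
  field_simp
  ring

end

theorem Real.rpow_one_div_three_pow_three {M : ℝ} (hM : 0 ≤ M) :
    (M ^ ((1 : ℝ) / 3)) ^ 3 = M := by
  rw [one_div]; exact_mod_cast Real.rpow_inv_natCast_pow hM three_ne_zero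

theorem Real.rpow_neg_two_div_three {M : ℝ} (hM : 0 ≤ M) :
    M ^ (-(2 : ℝ) / 3) = ((M ^ ((1 : ℝ) / 3)) ^ 2)⁻¹ := by
  rw [← Real.rpow_natCast, ← Real.rpow_mul hM, ← Real.rpow_neg hM]; norm_num

theorem stmt_3_general (a M r x : ℝ) (hM : 0 < M) (p I : ℝ → ℝ → ℂ)
    (hp : ∀ r x : ℝ, p r x = (r : ℂ) - Complex.I * a * x)
    (hI : ∀ r x : ℝ, I r x = -((M ^ ((1 : ℝ) / 3) : ℝ) : ℂ) / p r x)
    (hpne : p r x ≠ 0) :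
    -((I r x) ^ 4)⁻¹ * kerrPairing a M I I r x + I r x + (starRingEnd ℂ) (I r x)
      = -((M ^ (-(2 : ℝ) / 3) : ℝ) : ℂ) := by
  set c := M ^ ((1 : ℝ) / 3) with hc
  have hc0 : c ≠ 0 := (Real.rpow_pos_of_pos hM _).ne'
  obtain rfl : I = fun r x : ℝ => -(c : ℂ) / ((r : ℂ) - Complex.I * a * x) :=
    funext₂ fun r x => by rw [hI, hp]
  rw [hp] at hpne
  rw [kerrPairing_neg_div_self a c r x M hpne, Real.rpow_neg_two_div_three hM.le, ← hc]
  push_cast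
  exact kerrInvariant_eq_neg_inv_sq a c r x M hc0 (Real.rpow_one_div_three_pow_three hM.le) hpne

/-- For `M > 0`, `p = r - iax`, `𝓘 = -M^{1/3}/p`, the curvature invariant
`𝕄 = -𝓘⁻⁴⟨𝓘,𝓘⟩ + 𝓘 + conj 𝓘` is the constant `-M^{-2/3}` wherever
`p ≠ 0` and `Σ ≠ 0`. -/
theorem stmt_3 (a M r x : ℝ) (hM : 0 < M) (p I : ℝ → ℝ → ℂ)
    (hp : ∀ r x : ℝ, p r x = (r : ℂ) - Complex.I * a * x)
    (hI : ∀ r x : ℝ, I r x = -((M ^ ((1 : ℝ) / 3) : ℝ) : ℂ) / p r x)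
    (hSig : r ^ 2 + a ^ 2 * x ^ 2 ≠ 0) (hpne : p r x ≠ 0) :
    -((I r x) ^ 4)⁻¹ * kerrPairing a M I I r x + I r x + (starRingEnd ℂ) (I r x)
      = -((M ^ (-(2 : ℝ) / 3) : ℝ) : ℂ) :=
  stmt_3_general a M r x hM p I hp hI hpne
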